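/- arXiv:2012.13015 — 4 statements merged into one kernel-verified Lean document; each statement's English description precedes it below -/
import Mathlib

section
/- Let μ̃ᵢ, μ̃ⱼ be unit-amplitude sinusoids μ̃ₗ(t) = aₗcos(2πκₗt) + bₗsin(2πκₗt), aₗ²+bₗ²=1, with distinct positive integer frequencies κᵢ ≠ κⱼ such that also κᵢ ≠ 2κⱼ and 2κᵢ ≠ κⱼ and κᵢ + κⱼ ≠ 2·max(κᵢ, κⱼ). Then over the common period T = 1: (1/T)∫₀^T μ̃ᵢ(s)² μ̃ⱼ(s)² ds = 1/4. -/
open Real intervalIntegral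

lemma hc' (k : ℤ) (hk : k ≠ 0) : (2*π*(k:ℝ)) ≠ 0 := by
  have h1 := Real.pi_ne_zero
  have h2 : (k:ℝ) ≠ 0 := Int.cast_ne_zero.mpr hk
  positivity

lemma I_cos (k : ℤ) (hk : k ≠ 0) : ∫ t in (0:ℝ)..1, Real.cos (2*π*k*t) = 0 := by
  have hc := hc' k hk
  have hd : ∀ t ∈ Set.uIcc (0:ℝ) 1, HasDerivAt (fun t => Real.sin (2*π*k*t) / (2*π*k))
      (Real.cos (2*π*k*t)) t := by
    intro t _
    have : HasDerivAt (fun t : ℝ => 2*π*k*t) (2*π*k) t := by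
      simpa using (hasDerivAt_id t).const_mul (2*π*(k:ℝ))
    have := (Real.hasDerivAt_sin (2*π*k*t)).comp t this
    have := this.div_const (2*π*k)
    convert this using 1
    · rfl
    · rfl
    · rfl
    · rw [eq_div_iff hc]
  rw [intervalIntegral.integral_eq_sub_of_hasDerivAt hd (Continuous.intervalIntegrable (by fun_prop) _ _)]
  have : Real.sin (2*π*k) = 0 := by
    rw [show 2*π*(k:ℝ) = ((2*k : ℤ):ℝ)*π by push_cast; ring, Real.sin_int_mul_pi]
  simp [this]

lemma I_sin (k : ℤ) : ∫ t in (0:ℝ)..1, Real.sin (2*π*k*t) = 0 := by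
  rcases eq_or_ne k 0 with rfl | hk
  · simp
  have hc := hc' k hk
  have hd : ∀ t ∈ Set.uIcc (0:ℝ) 1, HasDerivAt (fun t => -Real.cos (2*π*k*t) / (2*π*k))
      (Real.sin (2*π*k*t)) t := by
    intro t _
    have : HasDerivAt (fun t : ℝ => 2*π*k*t) (2*π*k) t := by
      simpa using (hasDerivAt_id t).const_mul (2*π*(k:ℝ))
    have := ((Real.hasDerivAt_cos (2*π*k*t)).comp t this).neg
    have := this.div_const (2*π*k)
    convert this using 1
    · rfl
    · rfl
    · rfl
    · rw [eq_div_iff hc]; ring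
  rw [intervalIntegral.integral_eq_sub_of_hasDerivAt hd (Continuous.intervalIntegrable (by fun_prop) _ _)]
  have : Real.cos (2*π*k) = 1 := by
    have := Real.cos_int_mul_two_pi k
    convert this using 2
    push_cast; ring
  simp [this]

lemma I_cc (m n : ℤ) (h1 : m ≠ n) (h2 : m ≠ -n) :
    ∫ t in (0:ℝ)..1, Real.cos (2*π*m*t) * Real.cos (2*π*n*t) = 0 := by
  have heq : ∀ t : ℝ, Real.cos (2*π*m*t) * Real.cos (2*π*n*t) =
      (Real.cos (2*π*(m-n)*t) + Real.cos (2*π*(m+n)*t)) / 2 := by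
    intro t
    have e1 : (2*π*((m:ℝ)-n)*t) = 2*π*m*t - 2*π*n*t := by ring
    have e2 : (2*π*((m:ℝ)+n)*t) = 2*π*m*t + 2*π*n*t := by ring
    rw [e1, e2, Real.cos_sub, Real.cos_add]; ring
  calc ∫ t in (0:ℝ)..1, Real.cos (2*π*m*t) * Real.cos (2*π*n*t)
      = ∫ t in (0:ℝ)..1, (Real.cos (2*π*((m:ℝ)-n)*t) + Real.cos (2*π*((m:ℝ)+n)*t)) / 2 := by
        simp only [heq]
    _ = ((∫ t in (0:ℝ)..1, Real.cos (2*π*((m:ℝ)-n)*t)) +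
         (∫ t in (0:ℝ)..1, Real.cos (2*π*((m:ℝ)+n)*t))) / 2 := by
        rw [intervalIntegral.integral_div, intervalIntegral.integral_add
          (Continuous.intervalIntegrable (by fun_prop) _ _)
          (Continuous.intervalIntegrable (by fun_prop) _ _)]
    _ = 0 := by
        have a1 := I_cos (m-n) (sub_ne_zero.mpr h1)
        have a2 := I_cos (m+n) (by omega)
        push_cast at a1 a2
        rw [a1, a2]; norm_num

lemma I_cs (m n : ℤ) :
    ∫ t in (0:ℝ)..1, Real.cos (2*π*m*t) * Real.sin (2*π*n*t) = 0 := by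
  have heq : ∀ t : ℝ, Real.cos (2*π*m*t) * Real.sin (2*π*n*t) =
      (Real.sin (2*π*((m:ℝ)+n)*t) - Real.sin (2*π*((m:ℝ)-n)*t)) / 2 := by
    intro t
    have e1 : (2*π*((m:ℝ)-n)*t) = 2*π*m*t - 2*π*n*t := by ring
    have e2 : (2*π*((m:ℝ)+n)*t) = 2*π*m*t + 2*π*n*t := by ring
    rw [e1, e2, Real.sin_sub, Real.sin_add]; ring
  calc ∫ t in (0:ℝ)..1, Real.cos (2*π*m*t) * Real.sin (2*π*n*t)
      = ∫ t in (0:ℝ)..1, (Real.sin (2*π*((m:ℝ)+n)*t) - Real.sin (2*π*((m:ℝ)-n)*t)) / 2 := by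
        simp only [heq]
    _ = ((∫ t in (0:ℝ)..1, Real.sin (2*π*((m:ℝ)+n)*t)) -
         (∫ t in (0:ℝ)..1, Real.sin (2*π*((m:ℝ)-n)*t))) / 2 := by
        rw [intervalIntegral.integral_div, intervalIntegral.integral_sub
          (Continuous.intervalIntegrable (by fun_prop) _ _)
          (Continuous.intervalIntegrable (by fun_prop) _ _)]
    _ = 0 := by
        have a1 := I_sin (m+n)
        have a2 := I_sin (m-n)
        push_cast at a1 a2
        rw [a1, a2]; norm_num

lemma I_ss (m n : ℤ) (h1 : m ≠ n) (h2 : m ≠ -n) :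
    ∫ t in (0:ℝ)..1, Real.sin (2*π*m*t) * Real.sin (2*π*n*t) = 0 := by
  have heq : ∀ t : ℝ, Real.sin (2*π*m*t) * Real.sin (2*π*n*t) =
      (Real.cos (2*π*((m:ℝ)-n)*t) - Real.cos (2*π*((m:ℝ)+n)*t)) / 2 := by
    intro t
    have e1 : (2*π*((m:ℝ)-n)*t) = 2*π*m*t - 2*π*n*t := by ring
    have e2 : (2*π*((m:ℝ)+n)*t) = 2*π*m*t + 2*π*n*t := by ring
    rw [e1, e2, Real.cos_sub, Real.cos_add]; ring
  calc ∫ t in (0:ℝ)..1, Real.sin (2*π*m*t) * Real.sin (2*π*n*t)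
      = ∫ t in (0:ℝ)..1, (Real.cos (2*π*((m:ℝ)-n)*t) - Real.cos (2*π*((m:ℝ)+n)*t)) / 2 := by
        simp only [heq]
    _ = ((∫ t in (0:ℝ)..1, Real.cos (2*π*((m:ℝ)-n)*t)) -
         (∫ t in (0:ℝ)..1, Real.cos (2*π*((m:ℝ)+n)*t))) / 2 := by
        rw [intervalIntegral.integral_div, intervalIntegral.integral_sub
          (Continuous.intervalIntegrable (by fun_prop) _ _)
          (Continuous.intervalIntegrable (by fun_prop) _ _)]
    _ = 0 := by
        have a1 := I_cos (m-n) (sub_ne_zero.mpr h1)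
        have a2 := I_cos (m+n) (by omega)
        push_cast at a1 a2
        rw [a1, a2]; norm_num

lemma combo (c0 c1 c2 c3 c4 c5 c6 c7 c8 : ℝ) (m n : ℤ) (hm : m ≠ 0) (hn : n ≠ 0)
    (h1 : m ≠ n) (h2 : m ≠ -n) :
    ∫ t in (0:ℝ)..1, (c0 + c1 * Real.cos (2*π*m*t) + c2 * Real.sin (2*π*m*t)
      + c3 * Real.cos (2*π*n*t) + c4 * Real.sin (2*π*n*t)
      + c5 * (Real.cos (2*π*m*t) * Real.cos (2*π*n*t))
      + c6 * (Real.cos (2*π*m*t) * Real.sin (2*π*n*t))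
      + c7 * (Real.sin (2*π*m*t) * Real.cos (2*π*n*t))
      + c8 * (Real.sin (2*π*m*t) * Real.sin (2*π*n*t))) = c0 := by
  have hsc : ∀ t : ℝ, Real.sin (2*π*m*t) * Real.cos (2*π*n*t)
      = Real.cos (2*π*n*t) * Real.sin (2*π*m*t) := fun t => mul_comm _ _
  rw [intervalIntegral.integral_add (Continuous.intervalIntegrable (by fun_prop) _ _)
      (Continuous.intervalIntegrable (by fun_prop) _ _)]
  rw [intervalIntegral.integral_add (Continuous.intervalIntegrable (by fun_prop) _ _)
      (Continuous.intervalIntegrable (by fun_prop) _ _)]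
  rw [intervalIntegral.integral_add (Continuous.intervalIntegrable (by fun_prop) _ _)
      (Continuous.intervalIntegrable (by fun_prop) _ _)]
  rw [intervalIntegral.integral_add (Continuous.intervalIntegrable (by fun_prop) _ _)
      (Continuous.intervalIntegrable (by fun_prop) _ _)]
  rw [intervalIntegral.integral_add (Continuous.intervalIntegrable (by fun_prop) _ _)
      (Continuous.intervalIntegrable (by fun_prop) _ _)]
  rw [intervalIntegral.integral_add (Continuous.intervalIntegrable (by fun_prop) _ _)
      (Continuous.intervalIntegrable (by fun_prop) _ _)]
  rw [intervalIntegral.integral_add (Continuous.intervalIntegrable (by fun_prop) _ _)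
      (Continuous.intervalIntegrable (by fun_prop) _ _)]
  rw [intervalIntegral.integral_add (Continuous.intervalIntegrable (by fun_prop) _ _)
      (Continuous.intervalIntegrable (by fun_prop) _ _)]
  simp only [intervalIntegral.integral_const_mul, hsc]
  rw [I_cos m hm, I_sin m, I_cos n hn, I_sin n, I_cc m n h1 h2, I_cs m n, I_cs n m,
      I_ss m n h1 h2]
  simp

lemma sq_sinusoid (a b x : ℝ) (h : a^2 + b^2 = 1) :
    (a * Real.cos x + b * Real.sin x)^2
      = 1/2 + ((a^2 - b^2)/2) * Real.cos (2*x) + (a*b) * Real.sin (2*x) := by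
  rw [Real.cos_two_mul, Real.sin_two_mul]
  linear_combination b^2 * Real.sin_sq_add_cos_sq x + h / 2

theorem stmt_10 (ai bi aj bj : ℝ) (hi : ai ^ 2 + bi ^ 2 = 1) (hj : aj ^ 2 + bj ^ 2 = 1)
    (κi κj : ℕ) (hκi : 0 < κi) (hκj : 0 < κj) (hne : κi ≠ κj)
    (h1 : κi ≠ 2 * κj) (h2 : 2 * κi ≠ κj) (h3 : κi + κj ≠ 2 * max κi κj) :
    (1 / (1 : ℝ)) * ∫ s in (0 : ℝ)..1,
      (ai * Real.cos (2 * π * κi * s) + bi * Real.sin (2 * π * κi * s)) ^ 2 *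
      (aj * Real.cos (2 * π * κj * s) + bj * Real.sin (2 * π * κj * s)) ^ 2 = 1 / 4 := by
  set ci := (ai^2 - bi^2)/2 with hci
  set di := ai*bi with hdi
  set cj := (aj^2 - bj^2)/2 with hcj
  set dj := aj*bj with hdj
  set m : ℤ := 2*κi with hm
  set n : ℤ := 2*κj with hn
  have heq : Set.EqOn
      (fun s : ℝ => (ai * Real.cos (2 * π * κi * s) + bi * Real.sin (2 * π * κi * s)) ^ 2 *
        (aj * Real.cos (2 * π * κj * s) + bj * Real.sin (2 * π * κj * s)) ^ 2)
      (fun t : ℝ => (1/4 : ℝ) + (ci/2) * Real.cos (2*π*m*t) + (di/2) * Real.sin (2*π*m*t)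
        + (cj/2) * Real.cos (2*π*n*t) + (dj/2) * Real.sin (2*π*n*t)
        + (ci*cj) * (Real.cos (2*π*m*t) * Real.cos (2*π*n*t))
        + (ci*dj) * (Real.cos (2*π*m*t) * Real.sin (2*π*n*t))
        + (di*cj) * (Real.sin (2*π*m*t) * Real.cos (2*π*n*t))
        + (di*dj) * (Real.sin (2*π*m*t) * Real.sin (2*π*n*t)))
      (Set.uIcc 0 1) := by
    intro t _
    simp only [hm, hn]
    push_cast
    rw [sq_sinusoid ai bi _ hi, sq_sinusoid aj bj _ hj]
    rw [hci, hdi, hcj, hdj]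
    ring_nf
  rw [intervalIntegral.integral_congr heq,
      combo (1/4) (ci/2) (di/2) (cj/2) (dj/2) (ci*cj) (ci*dj) (di*cj) (di*dj) m n
        (by omega) (by omega) (by omega) (by omega)]
  norm_num
end

section
/- Let V : ℝⁿ → ℝ≥0 be continuously differentiable along a solution x(t) of an ODE, and suppose V̇(x(t)) ≤ −c₁ V(x(t))^{p} − c₂ V(x(t))^{q} with c₁, c₂ > 0, 0 < p < 1 < q. Then V(x(t)) = 0 for all t ≥ T* where T* = 1/(c₁(1−p)) + 1/(c₂(q−1)). -/
/-!
Along the trajectory, `W ^ (1 - r) / (1 - r)` decreases at rate at least `c` whenever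
`W' ≤ -c W ^ r` and `W > 0`. With `r = q > 1` this forces `W < 1` within time `1 / (c₂ (q - 1))`
from any initial value; with `r = p < 1`, starting from `W ≤ 1`, it forces `W` to vanish within a
further time `1 / (c₁ (1 - p))`.
-/

open Set

theorem rpow_one_sub_div_sub_le_of_hasDerivAt {W d : ℝ → ℝ} {a b c r : ℝ} (hab : a ≤ b)
    (hr : r ≠ 1) (hW : ∀ s ∈ Icc a b, HasDerivAt W (d s) s) (hpos : ∀ s ∈ Icc a b, 0 < W s)
    (hd : ∀ s ∈ Icc a b, d s ≤ -c * W s ^ r) :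
    W b ^ (1 - r) / (1 - r) - W a ^ (1 - r) / (1 - r) ≤ -c * (b - a) := by
  set g : ℝ → ℝ := fun τ => W τ ^ (1 - r) / (1 - r) + c * τ
  have hg : ∀ s ∈ Icc a b, HasDerivAt g (W s ^ (-r) * d s + c) s := by
    intro s hs
    have hpow := ((hW s hs).rpow_const (p := 1 - r) (Or.inl (hpos s hs).ne')).div_const (1 - r)
    refine (hpow.fun_add ((hasDerivAt_id' s).const_mul c)).congr_deriv ?_
    rw [sub_sub_cancel_left]
    field_simp [sub_ne_zero.2 hr.symm]
  have hg' : ∀ s ∈ Icc a b, W s ^ (-r) * d s + c ≤ 0 := by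
    intro s hs
    have hWr : W s ^ (-r) * W s ^ r = 1 := by
      rw [Real.rpow_neg (hpos s hs).le, inv_mul_cancel₀ (Real.rpow_pos_of_pos (hpos s hs) r).ne']
    calc W s ^ (-r) * d s + c ≤ W s ^ (-r) * (-c * W s ^ r) + c := by
          gcongr
          · exact (Real.rpow_pos_of_pos (hpos s hs) _).le
          · exact hd s hs
      _ = 0 := by linear_combination (-c) * hWr
  have hanti : AntitoneOn g (Icc a b) :=
    antitoneOn_of_hasDerivWithinAt_nonpos (convex_Icc a b)
      (fun s hs => (hg s hs).continuousAt.continuousWithinAt)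
      (fun s hs => (hg s (interior_subset hs)).hasDerivWithinAt)
      (fun s hs => hg' s (interior_subset hs))
  have := hanti (left_mem_Icc.2 hab) (right_mem_Icc.2 hab) hab
  simp only [g] at this
  linarith

theorem mul_sub_lt_rpow_of_hasDerivAt_le_neg_rpow_of_lt_one {W d : ℝ → ℝ} {a b c p : ℝ}
    (hab : a ≤ b) (hp : p < 1) (hW : ∀ s ∈ Icc a b, HasDerivAt W (d s) s)
    (hpos : ∀ s ∈ Icc a b, 0 < W s) (hd : ∀ s ∈ Icc a b, d s ≤ -c * W s ^ p) :
    c * (1 - p) * (b - a) < W a ^ (1 - p) := by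
  have h1p : 0 < 1 - p := by linarith
  have hdecay := rpow_one_sub_div_sub_le_of_hasDerivAt hab hp.ne hW hpos hd
  rw [← sub_div, div_le_iff₀ h1p] at hdecay
  have := Real.rpow_pos_of_pos (hpos b (right_mem_Icc.2 hab)) (1 - p)
  linarith

theorem mul_sub_lt_rpow_of_hasDerivAt_le_neg_rpow_of_one_lt {W d : ℝ → ℝ} {a b c q : ℝ}
    (hab : a ≤ b) (hq : 1 < q) (hW : ∀ s ∈ Icc a b, HasDerivAt W (d s) s)
    (hpos : ∀ s ∈ Icc a b, 0 < W s) (hd : ∀ s ∈ Icc a b, d s ≤ -c * W s ^ q) :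
    c * (q - 1) * (b - a) < W b ^ (1 - q) := by
  have h1q : 1 - q < 0 := by linarith
  have hdecay := rpow_one_sub_div_sub_le_of_hasDerivAt hab hq.ne' hW hpos hd
  rw [← sub_div, div_le_iff_of_neg h1q] at hdecay
  have := Real.rpow_pos_of_pos (hpos a (left_mem_Icc.2 hab)) (1 - q)
  linarith

theorem antitoneOn_Ici_of_hasDerivAt_of_nonpos {W d : ℝ → ℝ} {a : ℝ}
    (hW : ∀ s ≥ a, HasDerivAt W (d s) s) (hd : ∀ s ≥ a, d s ≤ 0) : AntitoneOn W (Ici a) :=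
  antitoneOn_of_hasDerivWithinAt_nonpos (convex_Ici a)
    (fun s hs => (hW s hs).continuousAt.continuousWithinAt)
    (fun s hs => (hW s (interior_subset hs)).hasDerivWithinAt)
    (fun s hs => hd s (interior_subset hs))

theorem eq_zero_of_hasDerivAt_le_neg_rpow_sub_rpow {W d : ℝ → ℝ} {c₁ c₂ p q : ℝ}
    (hc₁ : 0 < c₁) (hc₂ : 0 < c₂) (hp : p < 1) (hq : 1 < q) (hW₀ : ∀ s ≥ 0, 0 ≤ W s)
    (hW : ∀ s ≥ 0, HasDerivAt W (d s) s)
    (hd : ∀ s ≥ 0, d s ≤ -c₁ * W s ^ p - c₂ * W s ^ q) :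
    ∀ t ≥ 1 / (c₁ * (1 - p)) + 1 / (c₂ * (q - 1)), W t = 0 := by
  have h1p : 0 < 1 - p := by linarith
  have hq1 : 0 < q - 1 := by linarith
  set t₁ := 1 / (c₂ * (q - 1))
  set T := 1 / (c₁ * (1 - p)) + t₁
  have ht₁ : 0 ≤ t₁ := by positivity
  have ht₁T : t₁ ≤ T := by simp only [T]; linarith [show 0 ≤ 1 / (c₁ * (1 - p)) by positivity]
  have hT : 0 ≤ T := ht₁.trans ht₁T
  have hpow_nonneg : ∀ s ≥ 0, ∀ r : ℝ, 0 ≤ W s ^ r := fun s hs r => Real.rpow_nonneg (hW₀ s hs) r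
  have hanti : AntitoneOn W (Ici 0) := antitoneOn_Ici_of_hasDerivAt_of_nonpos hW fun s hs => by
    nlinarith [hd s hs, hpow_nonneg s hs p, hpow_nonneg s hs q]
  suffices hWT : W T = 0 by
    intro t ht
    have := hanti hT (hT.trans ht) ht
    linarith [hW₀ t (hT.trans ht)]
  by_contra hWT
  have hpos : ∀ s ∈ Icc 0 T, 0 < W s := fun s hs =>
    ((hW₀ T hT).lt_of_ne' hWT).trans_le (hanti hs.1 hT hs.2)
  have hsmall : W t₁ < 1 := by
    have h := mul_sub_lt_rpow_of_hasDerivAt_le_neg_rpow_of_one_lt (c := c₂) ht₁ hq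
      (fun s hs => hW s hs.1) (fun s hs => hpos s ⟨hs.1, hs.2.trans ht₁T⟩)
      (fun s hs => by nlinarith [hd s hs.1, hpow_nonneg s hs.1 p])
    rw [show c₂ * (q - 1) * (t₁ - 0) = 1 by simp only [t₁, sub_zero]; field_simp,
      Real.one_lt_rpow_iff_of_pos (hpos t₁ ⟨ht₁, ht₁T⟩)] at h
    rcases h with ⟨-, h⟩ | ⟨h, -⟩
    · linarith
    · exact h
  have h := mul_sub_lt_rpow_of_hasDerivAt_le_neg_rpow_of_lt_one (c := c₁) ht₁T hp
    (fun s hs => hW s (ht₁.trans hs.1)) (fun s hs => hpos s ⟨ht₁.trans hs.1, hs.2⟩)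
    (fun s hs => by nlinarith [hd s (ht₁.trans hs.1), hpow_nonneg s (ht₁.trans hs.1) q])
  rw [show c₁ * (1 - p) * (T - t₁) = 1 by simp only [T]; field_simp; ring] at h
  exact (Real.rpow_lt_one (hW₀ t₁ ht₁) hsmall h1p).not_gt h

theorem stmt_11_general (n : ℕ) (V : EuclideanSpace ℝ (Fin n) → ℝ) (x : ℝ → EuclideanSpace ℝ (Fin n))
    (c₁ c₂ p q : ℝ) (hc₁ : 0 < c₁) (hc₂ : 0 < c₂) (hp₁ : p < 1) (hq : 1 < q)
    (hVnonneg : ∀ z, 0 ≤ V z)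
    (d : ℝ → ℝ)
    (hderiv : ∀ t ≥ 0, HasDerivAt (fun τ => V (x τ)) (d t) t)
    (hineq : ∀ t ≥ 0, d t ≤ -c₁ * (V (x t)) ^ p - c₂ * (V (x t)) ^ q) :
    ∀ t ≥ 1 / (c₁ * (1 - p)) + 1 / (c₂ * (q - 1)), V (x t) = 0 :=
  eq_zero_of_hasDerivAt_le_neg_rpow_sub_rpow hc₁ hc₂ hp₁ hq (fun s _ => hVnonneg (x s)) hderiv hineq

theorem stmt_11 (n : ℕ) (V : EuclideanSpace ℝ (Fin n) → ℝ) (x : ℝ → EuclideanSpace ℝ (Fin n))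
    (c₁ c₂ p q : ℝ) (hc₁ : 0 < c₁) (hc₂ : 0 < c₂) (hp₀ : 0 < p) (hp₁ : p < 1) (hq : 1 < q)
    (hVnonneg : ∀ z, 0 ≤ V z)
    (d : ℝ → ℝ)
    (hderiv : ∀ t ≥ 0, HasDerivAt (fun τ => V (x τ)) (d t) t)
    (hineq : ∀ t ≥ 0, d t ≤ -c₁ * (V (x t)) ^ p - c₂ * (V (x t)) ^ q) :
    ∀ t ≥ 1 / (c₁ * (1 - p)) + 1 / (c₂ * (q - 1)), V (x t) = 0 :=
  stmt_11_general n V x c₁ c₂ p q hc₁ hc₂ hp₁ hq hVnonneg d hderiv hineq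
end

section
/- Let g : ℝ≥0 → ℝ≥0 be differentiable with g(t)' ≤ −c₁ g(t)^{p} for all t with g(t) > 0, where c₁ > 0 and 0 < p < 1. Then g(t) = 0 for all t ≥ g(0)^{1−p}/(c₁(1−p)). -/
/-!
With `q = 1 - p`, the quantity `g^q + c₁ q t` is non-increasing on every interval where `g > 0`.
If `g` has no zero on `[0, t]`, this gives `g(t)^q ≤ g(0)^q - c₁ q t`, impossible for
`t ≥ g(0)^q / (c₁ q)` when `g(t) > 0`. Otherwise, from the last zero `s < t` it gives
`g(t)^q ≤ c₁ q (s - t) < 0`.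
-/

open Set

section

variable {g : ℝ → ℝ} {c p a b : ℝ}

/-- Where `g > 0`, the chain rule gives `(g^(1-p))' = (1-p) g^(-p) g' ≤ -c (1-p)`. -/
theorem antitoneOn_rpow_one_sub_add_mul (hp : p ≤ 1) (hcont : ContinuousOn g (Icc a b))
    (hdiff : ∀ u ∈ Ioo a b, DifferentiableAt ℝ g u) (hpos : ∀ u ∈ Ioo a b, 0 < g u)
    (hineq : ∀ u ∈ Ioo a b, deriv g u ≤ -c * g u ^ p) :
    AntitoneOn (fun u => g u ^ (1 - p) + c * (1 - p) * u) (Icc a b) := by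
  have hq : 0 ≤ 1 - p := by linarith
  have hderiv : ∀ u ∈ Ioo a b, HasDerivAt (fun u => g u ^ (1 - p) + c * (1 - p) * u)
      (deriv g u * (1 - p) * g u ^ (1 - p - 1) + c * (1 - p)) u := fun u hu =>
    ((hdiff u hu).hasDerivAt.rpow_const (Or.inl (hpos u hu).ne')).add
      (by simpa using (hasDerivAt_id u).const_mul (c * (1 - p)))
  refine antitoneOn_of_deriv_nonpos (convex_Icc a b)
    ((hcont.rpow_const fun _ _ => Or.inr hq).add (continuousOn_const.mul continuousOn_id))
    (fun u hu => ?_) (fun u hu => ?_) <;> rw [interior_Icc] at hu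
  · exact (hderiv u hu).differentiableAt.differentiableWithinAt
  · have hgu := hpos u hu
    have hcancel : g u ^ p * g u ^ (1 - p - 1) = 1 := by
      rw [← Real.rpow_add hgu, show p + (1 - p - 1) = 0 by ring, Real.rpow_zero]
    have hmul := mul_le_mul_of_nonneg_right (hineq u hu)
      (mul_nonneg hq (Real.rpow_pos_of_pos hgu (1 - p - 1)).le)
    rw [(hderiv u hu).deriv]
    linear_combination hmul - c * (1 - p) * hcancel

theorem exists_last_zero_or_forall_ne_zero (hcont : ContinuousOn g (Icc a b)) :
    (∃ s ∈ Icc a b, g s = 0 ∧ ∀ u ∈ Ioc s b, g u ≠ 0) ∨ ∀ u ∈ Icc a b, g u ≠ 0 := by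
  by_cases hZ : (Icc a b ∩ g ⁻¹' {0}).Nonempty
  · obtain ⟨s, ⟨hs, hgs⟩, hmax⟩ := (isCompact_Icc.of_isClosed_subset
      (hcont.preimage_isClosed_of_isClosed isClosed_Icc isClosed_singleton)
      inter_subset_left).exists_isGreatest hZ
    refine Or.inl ⟨s, hs, hgs, fun u hu hgu => ?_⟩
    exact hu.1.not_ge (hmax ⟨⟨hs.1.trans hu.1.le, hu.2⟩, hgu⟩)
  · exact Or.inr fun u hu hgu => hZ ⟨u, hu, hgu⟩

end

theorem stmt_18_general (g : ℝ → ℝ) (c₁ p : ℝ) (hc₁ : 0 < c₁) (hp₁ : p < 1)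
    (hnonneg : ∀ t ≥ 0, 0 ≤ g t) (hdiff : ∀ t ≥ 0, DifferentiableAt ℝ g t)
    (hineq : ∀ t ≥ 0, 0 < g t → deriv g t ≤ -c₁ * g t ^ p) :
    ∀ t ≥ g 0 ^ (1 - p) / (c₁ * (1 - p)), g t = 0 := by
  intro t ht
  by_contra hgt
  have hcq : 0 < c₁ * (1 - p) := mul_pos hc₁ (by linarith)
  have ht₀ : 0 ≤ t := le_trans (by positivity [hnonneg 0 le_rfl]) ht
  have hcont : ContinuousOn g (Icc 0 t) := fun u hu =>
    (hdiff u hu.1).continuousAt.continuousWithinAt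
  have hgt_pos : 0 < g t ^ (1 - p) := Real.rpow_pos_of_pos ((hnonneg t ht₀).lt_of_ne' hgt) _
  have hanti : ∀ s ∈ Icc 0 t, (∀ u ∈ Ioc s t, g u ≠ 0) →
      g t ^ (1 - p) + c₁ * (1 - p) * t ≤ g s ^ (1 - p) + c₁ * (1 - p) * s := by
    intro s hs hne
    have hpos : ∀ u ∈ Ioo s t, 0 < g u := fun u hu =>
      (hnonneg u (hs.1.trans hu.1.le)).lt_of_ne' (hne u (Ioo_subset_Ioc_self hu))
    exact antitoneOn_rpow_one_sub_add_mul hp₁.le (hcont.mono (Icc_subset_Icc_left hs.1))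
      (fun u hu => hdiff u (hs.1.trans hu.1.le)) hpos
      (fun u hu => hineq u (hs.1.trans hu.1.le) (hpos u hu)) ⟨le_rfl, hs.2⟩ ⟨hs.2, le_rfl⟩ hs.2
  rcases exists_last_zero_or_forall_ne_zero hcont with ⟨s, hs, hgs, hne⟩ | hne
  · have hst : s < t := hs.2.lt_of_ne fun h => hgt (h ▸ hgs)
    have := hanti s hs hne
    rw [hgs, Real.zero_rpow (by linarith)] at this
    nlinarith
  · have := hanti 0 ⟨le_rfl, ht₀⟩ fun u hu => hne u (Ioc_subset_Icc_self hu)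
    rw [ge_iff_le, div_le_iff₀ hcq] at ht
    nlinarith

theorem stmt_18 (g : ℝ → ℝ) (c₁ p : ℝ) (hc₁ : 0 < c₁) (hp₀ : 0 < p) (hp₁ : p < 1)
    (hnonneg : ∀ t ≥ 0, 0 ≤ g t) (hdiff : ∀ t ≥ 0, DifferentiableAt ℝ g t)
    (hineq : ∀ t ≥ 0, 0 < g t → deriv g t ≤ -c₁ * g t ^ p) :
    ∀ t ≥ g 0 ^ (1 - p) / (c₁ * (1 - p)), g t = 0 :=
  stmt_18_general g c₁ p hc₁ hp₁ hnonneg hdiff hineq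
end

section
/- Let g : ℝ≥0 → ℝ≥0 be differentiable with g'(t) ≤ −c₂ g(t)^{q} whenever g(t) ≥ 1, where c₂ > 0 and q > 1. Then for any g(0), there is t₀ ≤ 1/(c₂(q−1)) such that g(t₀) ≤ 1. -/
/-!
While `g ≥ 1`, the quantity `g t ^ (1 - q) - c₂ (q - 1) t` is nondecreasing, since the decay
inequality makes the derivative of `g ^ (1 - q)` at least `c₂ (q - 1)`. If `g` stayed above `1`
on the whole interval `[0, 1 / (c₂ (q - 1))]`, then `g ^ (1 - q)` would grow by at least `1` on it,
starting from a positive value, whereas `g > 1` forces `g ^ (1 - q) < 1`.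
-/

open Set

lemma mul_sub_one_le_of_le_neg_mul_rpow {x d c q : ℝ} (hx : 0 < x) (hq : 1 ≤ q)
    (hd : d ≤ -c * x ^ q) : c * (q - 1) ≤ d * ((1 - q) * x ^ (1 - q - 1)) := by
  have hxq : 0 < x ^ q := Real.rpow_pos_of_pos hx q
  have hinv : x ^ (1 - q - 1) = (x ^ q)⁻¹ := by
    rw [show 1 - q - 1 = -q by ring, Real.rpow_neg hx.le]
  calc c * (q - 1) = (-c * x ^ q) * (1 - q) * (x ^ q)⁻¹ := by field_simp; ring
    _ ≤ d * (1 - q) * (x ^ q)⁻¹ := by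
        gcongr ?_ * _
        exact mul_le_mul_of_nonpos_right hd (by linarith)
    _ = d * ((1 - q) * x ^ (1 - q - 1)) := by rw [hinv]; ring

section DecayInequality

variable {g : ℝ → ℝ} {c q a b : ℝ}

lemma hasDerivAt_rpow_one_sub_sub_mul {t : ℝ} (hg : 0 < g t) (hdiff : DifferentiableAt ℝ g t) :
    HasDerivAt (fun s => g s ^ (1 - q) - c * (q - 1) * s)
      (deriv g t * ((1 - q) * g t ^ (1 - q - 1)) - c * (q - 1)) t := by
  have hpow : HasDerivAt (fun s => g s ^ (1 - q)) (deriv g t * ((1 - q) * g t ^ (1 - q - 1))) t := by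
    rw [mul_comm]
    exact (Real.hasDerivAt_rpow_const (Or.inl hg.ne')).comp t hdiff.hasDerivAt
  exact hpow.sub ((hasDerivAt_id' t).const_mul (c * (q - 1)) |>.congr_deriv (mul_one _))

lemma monotoneOn_rpow_one_sub_sub_mul (hq : 1 ≤ q) (hpos : ∀ t ∈ Icc a b, 0 < g t)
    (hdiff : ∀ t ∈ Icc a b, DifferentiableAt ℝ g t)
    (hineq : ∀ t ∈ Icc a b, deriv g t ≤ -c * g t ^ q) :
    MonotoneOn (fun t => g t ^ (1 - q) - c * (q - 1) * t) (Icc a b) := by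
  have hderiv t (ht : t ∈ Icc a b) :=
    hasDerivAt_rpow_one_sub_sub_mul (c := c) (q := q) (hpos t ht) (hdiff t ht)
  refine monotoneOn_of_hasDerivWithinAt_nonneg (convex_Icc a b)
    (fun t ht => (hderiv t ht).continuousAt.continuousWithinAt)
    (fun t ht => (hderiv t (interior_subset ht)).hasDerivWithinAt) fun t ht => ?_
  have ht' := interior_subset ht
  exact sub_nonneg.2 (mul_sub_one_le_of_le_neg_mul_rpow (hpos t ht') hq (hineq t ht'))

lemma rpow_one_sub_add_mul_le (hq : 1 ≤ q) (hab : a ≤ b) (hpos : ∀ t ∈ Icc a b, 0 < g t)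
    (hdiff : ∀ t ∈ Icc a b, DifferentiableAt ℝ g t)
    (hineq : ∀ t ∈ Icc a b, deriv g t ≤ -c * g t ^ q) :
    g a ^ (1 - q) + c * (q - 1) * (b - a) ≤ g b ^ (1 - q) := by
  have := monotoneOn_rpow_one_sub_sub_mul hq hpos hdiff hineq
    (left_mem_Icc.2 hab) (right_mem_Icc.2 hab) hab
  simp only at this
  linarith

end DecayInequality

theorem stmt_19_general (g : ℝ → ℝ) (c₂ q : ℝ) (hc₂ : 0 < c₂) (hq : 1 < q)
    (hdiff : ∀ t ≥ 0, DifferentiableAt ℝ g t)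
    (hineq : ∀ t ≥ 0, 1 ≤ g t → deriv g t ≤ -c₂ * g t ^ q) :
    ∃ t₀, 0 ≤ t₀ ∧ t₀ ≤ 1 / (c₂ * (q - 1)) ∧ g t₀ ≤ 1 := by
  set T := 1 / (c₂ * (q - 1))
  have hq' : 0 < q - 1 := by linarith
  have hT : 0 ≤ T := by positivity
  by_contra! hcon
  have hgt : ∀ t ∈ Icc 0 T, 1 < g t := fun t ht => hcon t ht.1 ht.2
  have hgrowth := rpow_one_sub_add_mul_le hq.le hT (fun t ht => one_pos.trans (hgt t ht))
    (fun t ht => hdiff t ht.1) (fun t ht => hineq t ht.1 (hgt t ht).le)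
  have hcT : c₂ * (q - 1) * (T - 0) = 1 := by
    rw [sub_zero]; exact mul_one_div_cancel (by positivity)
  have h0 : 0 < g 0 ^ (1 - q) := Real.rpow_pos_of_pos (one_pos.trans (hgt 0 (left_mem_Icc.2 hT))) _
  have hTlt : g T ^ (1 - q) < 1 :=
    Real.rpow_lt_one_of_one_lt_of_neg (hgt T (right_mem_Icc.2 hT)) (by linarith)
  linarith

theorem stmt_19 (g : ℝ → ℝ) (c₂ q : ℝ) (hc₂ : 0 < c₂) (hq : 1 < q)
    (hnonneg : ∀ t ≥ 0, 0 ≤ g t) (hdiff : ∀ t ≥ 0, DifferentiableAt ℝ g t)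
    (hineq : ∀ t ≥ 0, 1 ≤ g t → deriv g t ≤ -c₂ * g t ^ q) :
    ∃ t₀, 0 ≤ t₀ ∧ t₀ ≤ 1 / (c₂ * (q - 1)) ∧ g t₀ ≤ 1 :=
  stmt_19_general g c₂ q hc₂ hq hdiff hineq
end
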